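/- Define S_m = D_{m+1} − D_m. Then for every j ≥ 0 one has S_j = S_{p−1−S_j} (which makes sense since 0 ≤ S_j ≤ p−2, so 1 ≤ p−1−S_j ≤ p−1). -/

import Mathlib

/-!
The first digit of `Sʲx` is `x₀ + j mod p`, and `φ(x) ≤ g(x₀)` where `g(r) = r` for `r < p - 1`
and `g(p - 1) = p - 2` (`phiBound`). Hence for `m ≤ p`, `φ^(m)` is at most
`V_m = g(p - m) + ⋯ + g(p - 1)` (`phiSumBound`),
the largest `g`-sum over `m` cyclically consecutive residues, with equality on the cylinder
`x₀ = p - m, x₁ = p - 2` of positive measure. So `D_m = V_m` and `S_k = p - 1 - k` for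
`1 ≤ k ≤ p - 1`. Since `φ ≤ p - 2` everywhere on `Γ*`, also `S_j ≤ p - 2` for every `j`, and then
`S_{p-1-S_j} = p - 1 - (p - 1 - S_j) = S_j`.
-/

open MeasureTheory
open scoped NNReal ENNReal

namespace Chacon

/-- The space of digit sequences with digits in `{0, …, p-1}`. -/
def Gamma (p : ℕ) : Set (ℕ → ℕ) := {x | ∀ i, x i < p}

/-- `Γ*`: sequences with digits `< p` having infinitely many coordinates `≠ p - 1`. -/
def GammaStar (p : ℕ) : Set (ℕ → ℕ) :=
  {x | (∀ i, x i < p) ∧ {i | x i ≠ p - 1}.Infinite}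

/-- The least index `i` with `x i ≠ p - 1`. -/
noncomputable def firstNot (p : ℕ) (x : ℕ → ℕ) : ℕ :=
  sInf {i | x i ≠ p - 1}

/-- `φ(x) = x_i` where `i` is the least index with `x_i ≠ p - 1`. -/
noncomputable def phi (p : ℕ) (x : ℕ → ℕ) : ℕ :=
  x (firstNot p x)

/-- The odometer `S` (addition of `1` with carry): the initial run of digits
`p - 1` is replaced by zeros, and the first digit `≠ p - 1` is increased by one. -/
noncomputable def odo (p : ℕ) (x : ℕ → ℕ) : ℕ → ℕ :=
  fun i =>
    if i < firstNot p x then 0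
    else if i = firstNot p x then x i + 1
    else x i

/-- `φ^(m)(x) = ∑_{j=0}^{m-1} φ(S^j x)`. -/
noncomputable def phiSum (p m : ℕ) (x : ℕ → ℕ) : ℕ :=
  ∑ j ∈ Finset.range m, phi p ((odo p)^[j] x)

/-- The base-`p` digit sequence of a real number `u`. -/
noncomputable def digitsOf (p : ℕ) (u : ℝ) : ℕ → ℕ :=
  fun i => (⌊u * (p : ℝ) ^ (i + 1)⌋).toNat % p

/-- `λ`: the product probability measure on digit sequences under which the
coordinates are i.i.d., uniformly distributed in `{0, …, p-1}`; it is realized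
concretely as the distribution of the base-`p` digit sequence of a uniformly
distributed random point of `[0,1)`. -/
noncomputable def lam (p : ℕ) : Measure (ℕ → ℕ) :=
  Measure.map (digitsOf p) (volume.restrict (Set.Ico (0 : ℝ) 1))

/-- `π_m(j) = λ({x : φ^(m)(x) = j})`. -/
noncomputable def pim (p m j : ℕ) : ℝ≥0∞ :=
  lam p {x | phiSum p m x = j}

/-- `P_m^p(t) = ∑_{j ≥ 0} π_m(j) t^j`, a real polynomial
(the sum is over `0 ≤ j ≤ m (p-2)` since `0 ≤ φ^(m) ≤ m (p-2)` a.s.). -/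
noncomputable def P (p m : ℕ) (t : ℝ) : ℝ :=
  ∑ j ∈ Finset.range (m * (p - 2) + 1), (pim p m j).toReal * t ^ j

/-- The `n`-th triangular number `Δ_n = n (n+1) / 2`. -/
def tri (n : ℕ) : ℕ := n * (n + 1) / 2

/-- The degree `D_m` of `P_m^p`: the largest `j` with `π_m(j) ≠ 0`. -/
noncomputable def D (p m : ℕ) : ℕ := sSup {j | pim p m j ≠ 0}

/-- The lower degree `d_m` of `P_m^p`: the least `j` with `π_m(j) ≠ 0`. -/
noncomputable def d (p m : ℕ) : ℕ := sInf {j | pim p m j ≠ 0}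


/-- `S_m = D_{m+1} - D_m`. -/
noncomputable def Sseq (p m : ℕ) : ℕ := D p (m + 1) - D p m

variable {p : ℕ}

lemma firstNot_mem {x : ℕ → ℕ} (hx : x ∈ GammaStar p) : x (firstNot p x) ≠ p - 1 :=
  Nat.sInf_mem hx.2.nonempty

lemma firstNot_eq {x : ℕ → ℕ} {n : ℕ} (hn : x n ≠ p - 1) (hlt : ∀ i < n, x i = p - 1) :
    firstNot p x = n :=
  le_antisymm (Nat.sInf_le hn) (not_lt.mp fun h =>
    (Nat.sInf_mem (s := {i | x i ≠ p - 1}) ⟨n, hn⟩ : x (firstNot p x) ≠ p - 1) (hlt _ h))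

lemma firstNot_eq_zero {x : ℕ → ℕ} (h : x 0 ≠ p - 1) : firstNot p x = 0 :=
  firstNot_eq h fun _ hi => absurd hi (Nat.not_lt_zero _)

lemma mapsTo_odo_gammaStar : Set.MapsTo (odo p) (GammaStar p) (GammaStar p) := by
  intro x hx
  have hfirst := firstNot_mem hx
  refine ⟨fun i => ?_, (hx.2.sdiff (Set.finite_Iic (firstNot p x))).mono ?_⟩
  · have hxi := hx.1 i
    simp only [odo]
    split_ifs with hlt heq
    · omega
    · subst heq; omega
    · exact hxi
  · rintro i ⟨hi, hle⟩
    simp only [Set.mem_Iic, not_le] at hle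
    simpa [odo, not_lt.mpr hle.le, hle.ne'] using hi

lemma iterate_odo_mem_gammaStar {x : ℕ → ℕ} (hx : x ∈ GammaStar p) (j : ℕ) :
    (odo p)^[j] x ∈ GammaStar p :=
  mapsTo_odo_gammaStar.iterate j hx

lemma phi_le {x : ℕ → ℕ} (hx : x ∈ GammaStar p) : phi p x ≤ p - 2 := by
  have := firstNot_mem hx
  have := hx.1 (firstNot p x)
  unfold phi
  omega

lemma phiSum_succ (m : ℕ) (x : ℕ → ℕ) :
    phiSum p (m + 1) x = phiSum p m x + phi p ((odo p)^[m] x) :=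
  Finset.sum_range_succ _ _

lemma phiSum_le_mul {x : ℕ → ℕ} (hx : x ∈ GammaStar p) (m : ℕ) :
    phiSum p m x ≤ m * (p - 2) := by
  simpa [phiSum] using Finset.sum_le_sum fun j (_ : j ∈ Finset.range m) =>
    phi_le (iterate_odo_mem_gammaStar hx j)

lemma odo_apply_zero {x : ℕ → ℕ} (hx : x ∈ GammaStar p) : odo p x 0 = (x 0 + 1) % p := by
  have hx0 := hx.1 0
  by_cases h : x 0 = p - 1
  · have hpos : 0 < firstNot p x :=
      Nat.pos_of_ne_zero fun h0 => firstNot_mem hx (by rw [h0]; exact h)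
    simp only [odo, if_pos hpos]
    rw [h, Nat.sub_add_cancel (by omega), Nat.mod_self]
  · simp [odo, firstNot_eq_zero h, Nat.mod_eq_of_lt (show x 0 + 1 < p by omega)]

lemma iterate_odo_apply_zero {x : ℕ → ℕ} (hx : x ∈ GammaStar p) (j : ℕ) :
    (odo p)^[j] x 0 = (x 0 + j) % p := by
  induction j with
  | zero => exact (Nat.mod_eq_of_lt (hx.1 0)).symm
  | succ n ih =>
    rw [Function.iterate_succ_apply', odo_apply_zero (iterate_odo_mem_gammaStar hx n), ih,
      Nat.mod_add_mod, add_assoc]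

lemma odo_eq_update {x : ℕ → ℕ} (h : x 0 ≠ p - 1) :
    odo p x = Function.update x 0 (x 0 + 1) := by
  funext i
  rcases Nat.eq_zero_or_pos i with rfl | hi
  · simp [odo, firstNot_eq_zero h]
  · simp [odo, firstNot_eq_zero h, hi.ne']

lemma iterate_odo_eq_update {x : ℕ → ℕ} {j : ℕ} (hj : x 0 + j ≤ p - 1) :
    (odo p)^[j] x = Function.update x 0 (x 0 + j) := by
  induction j with
  | zero => simp
  | succ n ih =>
    have hne : Function.update x 0 (x 0 + n) 0 ≠ p - 1 := by
      rw [Function.update_self]; omega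
    rw [Function.iterate_succ_apply', ih (by omega), odo_eq_update hne, Function.update_self,
      Function.update_idem, add_assoc]

/-- The largest value of `φ` on `{x ∈ Γ* | x 0 = r}`. -/
def phiBound (p r : ℕ) : ℕ := if r = p - 1 then p - 2 else r

def phiSumBound (p m : ℕ) : ℕ := ∑ j ∈ Finset.range m, phiBound p (p - m + j)

lemma phi_le_phiBound {x : ℕ → ℕ} (hx : x ∈ GammaStar p) : phi p x ≤ phiBound p (x 0) := by
  by_cases h : x 0 = p - 1
  · simpa [phiBound, h] using phi_le hx
  · simp [phiBound, h, phi, firstNot_eq_zero h]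

lemma phiBound_mono {a b : ℕ} (hab : a ≤ b) (hb : b ≤ p - 1) : phiBound p a ≤ phiBound p b := by
  unfold phiBound
  split_ifs <;> omega

lemma sum_phiBound_mod_le {m c : ℕ} (hm : m ≤ p) (hc : c < p) :
    ∑ j ∈ Finset.range m, phiBound p ((c + j) % p) ≤ phiSumBound p m := by
  unfold phiSumBound
  rcases le_or_gt (c + m) p with hcm | hcm
  · refine Finset.sum_le_sum fun j hj => ?_
    rw [Finset.mem_range] at hj
    rw [Nat.mod_eq_of_lt (by omega)]
    exact phiBound_mono (by omega) (by omega)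
  -- The window wraps around: compare its part `c, …, p - 1` with the end of the top window
  -- and its part `0, …, w - 1` with the beginning.
  obtain ⟨w, rfl⟩ : ∃ w, m = w + (p - c) := ⟨m - (p - c), by omega⟩
  conv_lhs => rw [add_comm w, Finset.sum_range_add]
  rw [Finset.sum_range_add, add_comm (∑ j ∈ Finset.range w, _)]
  refine add_le_add (Finset.sum_le_sum fun j hj => ?_) (Finset.sum_le_sum fun j hj => ?_)
  · rw [Finset.mem_range] at hj
    rw [Nat.mod_eq_of_lt (by omega)]
    exact phiBound_mono (by omega) (by omega)
  · rw [Finset.mem_range] at hj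
    rw [show c + (p - c + j) = j + p by omega, Nat.add_mod_right, Nat.mod_eq_of_lt (by omega)]
    exact phiBound_mono (by omega) (by omega)

lemma phiSum_le_phiSumBound {x : ℕ → ℕ} (hx : x ∈ GammaStar p) {m : ℕ} (hm : m ≤ p) :
    phiSum p m x ≤ phiSumBound p m :=
  calc phiSum p m x ≤ ∑ j ∈ Finset.range m, phiBound p ((x 0 + j) % p) :=
        Finset.sum_le_sum fun j _ => by
          simpa [iterate_odo_apply_zero hx j] using
            phi_le_phiBound (iterate_odo_mem_gammaStar hx j)
    _ ≤ phiSumBound p m := sum_phiBound_mod_le hm (hx.1 0)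

lemma phi_update_zero (hp : 1 < p) {x : ℕ → ℕ} (hx1 : x 1 = p - 2) (r : ℕ) :
    phi p (Function.update x 0 r) = phiBound p r := by
  by_cases hr : r = p - 1
  · subst hr
    have hfirst : firstNot p (Function.update x 0 (p - 1)) = 1 :=
      firstNot_eq (by simp [hx1]; omega) fun i hi => by simp [Nat.lt_one_iff.mp hi]
    simp [phi, phiBound, hfirst, hx1]
  · simp [phi, phiBound, firstNot_eq_zero (x := Function.update x 0 r) (by simpa using hr), hr]

lemma phiSum_eq_phiSumBound (hp : 1 < p) {x : ℕ → ℕ} {m : ℕ} (hmp : m ≤ p) (hx0 : x 0 = p - m)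
    (hx1 : x 1 = p - 2) : phiSum p m x = phiSumBound p m := by
  refine Finset.sum_congr rfl fun j hj => ?_
  rw [Finset.mem_range] at hj
  rw [iterate_odo_eq_update (by omega), phi_update_zero hp hx1, hx0]

lemma phiSumBound_succ {k : ℕ} (hk : 1 ≤ k) (hkp : k + 1 ≤ p) :
    phiSumBound p (k + 1) = phiSumBound p k + (p - 1 - k) := by
  unfold phiSumBound
  rw [Finset.sum_range_succ']
  congr 1
  · exact Finset.sum_congr rfl fun j _ => congrArg _ (by omega)
  · rw [phiBound, if_neg (by omega)]
    omega

lemma digitsOf_eq (u : ℝ) (i : ℕ) : digitsOf p u i = ⌊u * (p : ℝ) ^ (i + 1)⌋₊ % p := by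
  rw [digitsOf, Int.floor_toNat]

lemma natFloor_mul_pow_succ (u : ℝ) (i : ℕ) :
    ⌊u * (p : ℝ) ^ (i + 1)⌋₊ = p * ⌊u * (p : ℝ) ^ i⌋₊ + digitsOf p u i := by
  rcases Nat.eq_zero_or_pos p with rfl | hp
  · simp [digitsOf_eq]
  have hdiv : u * (p : ℝ) ^ (i + 1) / p = u * (p : ℝ) ^ i := by
    field_simp
    ring
  rw [digitsOf_eq, ← hdiv, Nat.floor_div_natCast, Nat.div_add_mod]

lemma natFloor_add_one_of_digitsOf_eq (hp : 0 < p) {u : ℝ} {M : ℕ}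
    (h : ∀ i ≥ M, digitsOf p u i = p - 1) (t : ℕ) :
    ⌊u * (p : ℝ) ^ (M + t)⌋₊ + 1 = p ^ t * (⌊u * (p : ℝ) ^ M⌋₊ + 1) := by
  induction t with
  | zero => simp
  | succ t ih =>
    rw [← add_assoc, natFloor_mul_pow_succ, h _ (by omega), add_assoc, Nat.sub_add_cancel hp,
      ← mul_add_one, ih, pow_succ']
    ring

lemma digitsOf_mem_gammaStar (hp : 1 < p) {u : ℝ} (hu : 0 ≤ u) : digitsOf p u ∈ GammaStar p := by
  refine ⟨fun i => Nat.mod_lt _ (by omega), fun hfin => ?_⟩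
  obtain ⟨N, hN⟩ := hfin.bddAbove
  have hdig : ∀ i ≥ N + 1, digitsOf p u i = p - 1 := fun i hi =>
    not_not.mp fun hne => absurd (hN hne) (by omega)
  -- Then `u p^(N+1)` lies within `p^(-t)` below the next integer, for every `t`.
  have hbound : ∀ t, (p : ℝ) ^ t * (⌊u * (p : ℝ) ^ (N + 1)⌋₊ + 1 - u * (p : ℝ) ^ (N + 1)) ≤ 1 :=
    fun t => by
      have hfloor := Nat.floor_le (a := u * (p : ℝ) ^ (N + 1 + t)) (by positivity)
      have hcast :=
        congrArg (Nat.cast : ℕ → ℝ) (natFloor_add_one_of_digitsOf_eq (by omega) hdig t)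
      push_cast at hcast
      rw [pow_add] at hfloor hcast
      calc _ = (⌊u * ((p : ℝ) ^ (N + 1) * (p : ℝ) ^ t)⌋₊ + 1 : ℝ)
              - u * ((p : ℝ) ^ (N + 1) * (p : ℝ) ^ t) := by rw [hcast]; ring
        _ ≤ 1 := by linarith
  have hpos : 0 < (⌊u * (p : ℝ) ^ (N + 1)⌋₊ + 1 - u * (p : ℝ) ^ (N + 1) : ℝ) := by
    linarith [Nat.lt_floor_add_one (u * (p : ℝ) ^ (N + 1))]
  obtain ⟨t, ht⟩ := pow_unbounded_of_one_lt _⁻¹ (show (1 : ℝ) < p by exact_mod_cast hp)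
  linarith [hbound t, (inv_lt_iff_one_lt_mul₀ hpos).mp ht]

lemma digitsOf_zero_one (hp : 0 < p) {u : ℝ} {a b : ℕ} (ha : a < p) (hb : b < p)
    (h : ⌊u * (p : ℝ) ^ 2⌋₊ = a * p + b) : digitsOf p u 0 = a ∧ digitsOf p u 1 = b := by
  have hd1 : digitsOf p u 1 = b := by
    rw [digitsOf_eq, h, Nat.mul_comm, Nat.mul_add_mod, Nat.mod_eq_of_lt hb]
  have hfloor := natFloor_mul_pow_succ (p := p) u 1
  rw [h, hd1, pow_one, Nat.add_right_cancel_iff, Nat.mul_comm] at hfloor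
  have hd0 : ⌊u * (p : ℝ) ^ (0 + 1)⌋₊ = a := by
    rw [zero_add, pow_one]
    exact (Nat.eq_of_mul_eq_mul_left hp hfloor).symm
  rw [digitsOf_eq, hd0, Nat.mod_eq_of_lt ha]
  exact ⟨rfl, hd1⟩

lemma volume_digitsOf_cylinder_ne_zero (hp : 0 < p) {a b : ℕ} (ha : a < p) (hb : b < p) :
    volume ({u | digitsOf p u 0 = a ∧ digitsOf p u 1 = b} ∩ Set.Ico 0 1) ≠ 0 := by
  have hp2 : (0 : ℝ) < (p : ℝ) ^ 2 := by positivity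
  have hK : ((a * p + b : ℕ) : ℝ) + 1 ≤ (p : ℝ) ^ 2 := by
    have : a * p + b + 1 ≤ p ^ 2 := by nlinarith
    exact_mod_cast this
  refine (lt_of_lt_of_le ?_ (measure_mono (μ := volume) (s := Set.Ico
    ((a * p + b : ℕ) / (p : ℝ) ^ 2) (((a * p + b : ℕ) + 1) / (p : ℝ) ^ 2)) ?_)).ne'
  · rw [Real.volume_Ico, ENNReal.ofReal_pos, sub_pos]
    gcongr
    linarith
  · rintro u ⟨hl, hr⟩
    rw [div_le_iff₀ hp2] at hl
    rw [lt_div_iff₀ hp2] at hr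
    have hu : 0 ≤ u := by nlinarith
    exact ⟨digitsOf_zero_one hp ha hb ((Nat.floor_eq_iff (by positivity)).mpr ⟨hl, hr⟩),
      hu, by nlinarith⟩

lemma measurable_firstNot : Measurable (firstNot p) := by
  classical
  -- `firstNot` is a `Nat.find` once the all-`(p - 1)` sequence, where it is `sInf ∅ = 0`, is
  -- admitted at every index.
  have hex : ∀ x : ℕ → ℕ, ∃ i, x i ≠ p - 1 ∨ ∀ k, x k = p - 1 := fun x => by
    by_cases h : ∀ k, x k = p - 1
    · exact ⟨0, Or.inr h⟩
    · exact (not_forall.mp h).imp fun _ => Or.inl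
  have hfind : firstNot p = fun x => Nat.find (hex x) := by
    funext x
    by_cases h : ∀ k, x k = p - 1
    · simp [firstNot, h, eq_comm (a := 0), Nat.find_eq_zero]
    · exact firstNot_eq ((Nat.find_spec (hex x)).resolve_right h)
        fun i hi => not_not.mp (not_or.mp (Nat.find_min (hex x) hi)).1
  rw [hfind]
  refine measurable_find hex fun i => ?_
  simp only [Set.ofPred_or, Set.ofPred_forall]
  exact (measurableSet_eq_fun (measurable_pi_apply i) measurable_const).compl.union
    (MeasurableSet.iInter fun k => measurableSet_eq_fun (measurable_pi_apply k) measurable_const)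

lemma measurable_apply_firstNot {β : Type*} [MeasurableSpace β] {f : (ℕ → ℕ) → ℕ → β}
    (hf : ∀ n, Measurable fun x => f x n) : Measurable fun x => f x (firstNot p x) :=
  (measurable_from_prod_countable_left (f := fun q : (ℕ → ℕ) × ℕ => f q.1 q.2) hf).comp
    (measurable_id.prodMk measurable_firstNot)

lemma measurable_phiSum (m : ℕ) : Measurable (phiSum p m) := by
  have hphi : Measurable (phi p) := measurable_apply_firstNot fun n => measurable_pi_apply n
  have hodo : Measurable (odo p) := measurable_pi_lambda _ fun i =>
    measurable_apply_firstNot (f := fun x n => if i < n then 0 else if i = n then x i + 1 else x i)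
      fun n => by split_ifs <;> fun_prop
  exact Finset.measurable_sum _ fun j _ => hphi.comp (hodo.iterate j)

lemma measurable_digitsOf : Measurable (digitsOf p) :=
  measurable_pi_lambda _ fun _ => (measurable_from_top (f := fun z : ℤ => z.toNat % p)).comp
    (Int.measurable_floor.comp (measurable_id.mul_const _))

lemma pim_eq_volume (m j : ℕ) :
    pim p m j = volume ({u | phiSum p m (digitsOf p u) = j} ∩ Set.Ico 0 1) := by
  have hs : MeasurableSet {x : ℕ → ℕ | phiSum p m x = j} :=
    measurable_phiSum m (measurableSet_singleton j)
  rw [pim, lam, Measure.map_apply measurable_digitsOf hs,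
    Measure.restrict_apply (measurable_digitsOf hs)]
  rfl

lemma pim_eq_zero_of_forall {m j : ℕ} (h : ∀ u ∈ Set.Ico (0 : ℝ) 1, phiSum p m (digitsOf p u) ≠ j) :
    pim p m j = 0 := by
  rw [pim_eq_volume]
  exact measure_mono_null (fun u hu => (h u hu.2 hu.1).elim) measure_empty

lemma bddAbove_pim (hp : 1 < p) (m : ℕ) : BddAbove {j | pim p m j ≠ 0} :=
  ⟨m * (p - 2), fun _ hj => not_lt.mp fun hlt => hj <| pim_eq_zero_of_forall fun _ hu =>
    ((phiSum_le_mul (digitsOf_mem_gammaStar hp hu.1) m).trans_lt hlt).ne⟩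

lemma pim_eq_zero_of_D_lt (hp : 1 < p) {m j : ℕ} (hj : D p m < j) : pim p m j = 0 :=
  not_not.mp (notMem_of_csSup_lt hj (bddAbove_pim hp m))

lemma pim_phiSumBound_ne_zero (hp : 1 < p) {m : ℕ} (hm : 1 ≤ m) (hmp : m ≤ p) :
    pim p m (phiSumBound p m) ≠ 0 := by
  rw [pim_eq_volume]
  refine fun h0 => volume_digitsOf_cylinder_ne_zero (p := p) (by omega) (show p - m < p by omega)
    (show p - 2 < p by omega) (measure_mono_null ?_ h0)
  rintro u ⟨⟨hu0, hu1⟩, hu⟩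
  exact ⟨phiSum_eq_phiSumBound hp hmp hu0 hu1, hu⟩

lemma D_eq_phiSumBound (hp : 1 < p) {m : ℕ} (hm : 1 ≤ m) (hmp : m ≤ p) :
    D p m = phiSumBound p m :=
  le_antisymm
    (csSup_le' fun _ hj => not_lt.mp fun hlt => hj <| pim_eq_zero_of_forall fun _ hu =>
      ((phiSum_le_phiSumBound (digitsOf_mem_gammaStar hp hu.1) hmp).trans_lt hlt).ne)
    (le_csSup (bddAbove_pim hp m) (pim_phiSumBound_ne_zero hp hm hmp))

lemma D_succ_le (hp : 1 < p) (m : ℕ) : D p (m + 1) ≤ D p m + (p - 2) := by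
  refine csSup_le' fun j hj => not_lt.mp fun hlt => hj ?_
  -- Since `φ ≤ p - 2`, a value `j` of `φ^(m+1)` forces a value `> D_m` of `φ^(m)`.
  rw [pim_eq_volume]
  refine measure_mono_null (t := ⋃ i ∈ {i | D p m < i}, {u | phiSum p m (digitsOf p u) = i} ∩
    Set.Ico 0 1) (fun u ⟨hu, hu01⟩ => ?_)
    ((measure_biUnion_null_iff (Set.to_countable _)).mpr fun i hi => ?_)
  · have := phi_le (iterate_odo_mem_gammaStar (digitsOf_mem_gammaStar hp hu01.1) m)
    replace hu : phiSum p (m + 1) (digitsOf p u) = j := hu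
    rw [phiSum_succ] at hu
    exact Set.mem_biUnion (show D p m < phiSum p m (digitsOf p u) by omega) ⟨rfl, hu01⟩
  · rw [← pim_eq_volume]
    exact pim_eq_zero_of_D_lt hp hi

lemma Sseq_le (hp : 1 < p) (m : ℕ) : Sseq p m ≤ p - 2 := by
  have := D_succ_le hp m
  unfold Sseq
  omega

lemma Sseq_eq (hp : 1 < p) {k : ℕ} (hk : 1 ≤ k) (hkp : k + 1 ≤ p) : Sseq p k = p - 1 - k := by
  rw [Sseq, D_eq_phiSumBound hp (by omega) hkp, D_eq_phiSumBound hp hk (by omega),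
    phiSumBound_succ hk hkp]
  omega

/-- with `S_m = D_{m+1} - D_m`, for every `j ≥ 0`,
`S_j = S_{p-1-S_j}`. -/
theorem statement_13 (p : ℕ) (hp : 3 ≤ p) (j : ℕ) :
    Sseq p j = Sseq p (p - 1 - Sseq p j) := by
  have hS := Sseq_le (p := p) (by omega) j
  rw [Sseq_eq (k := p - 1 - Sseq p j) (by omega) (by omega) (by omega)]
  omega

end Chacon
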